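/- (Proposition 1, concrete one-layer instantiation.) Let W_Q, W'_Q ∈ ℝ^{3×3} satisfy W_Q·R = R·W_Q and W'_Q·R = R·W'_Q for all R ∈ SO(3); let W_K, W_V, W'_K : ℝ³ → ℝ^{3×3} satisfy W(R·y)·R = R·W(y) for all R ∈ SO(3), y ∈ ℝ³; and let W'_V : ℝ³ → ℝ^{1×3} satisfy W'_V(R·y)·R = W'_V(y) for all R ∈ SO(3), y ∈ ℝ³. Given a point cloud X : Fin N → ℝ³ and 1 ≤ k ≤ N, define: (i) the input features f_i(X) = X i − (1/|N_i^k(X)|)·Σ_{j ∈ N_i^k(X)} X j; (ii) the self-attention output F_P(X)_i = Σ_{j ∈ N_i^k(X)} α(i,j)·W_V(X j − X i)·f_j(X) with α(i,j) = exp(⟨W_Q·f_i(X), W_K(X j − X i)·f_j(X)⟩)/Σ_{j' ∈ N_i^k(X)} exp(⟨W_Q·f_i(X), W_K(X j' − X i)·f_{j'}(X)⟩); (iii) for a query q ∈ ℝ³ whose nearest point in X has unique index c, the query feature f_q(X,q) = q − (1/|N_c^k(X)|)·Σ_{j ∈ N_c^k(X)} X j; and (iv) the occupancy score 𝒯(X,q)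 = Σ_{j ∈ N_c^k(X)} β(j)·W'_V(X j − q)·F_P(X)_j with β(j) = exp(⟨W'_Q·f_q(X,q), W'_K(X j − q)·F_P(X)_j⟩)/Σ_{j' ∈ N_c^k(X)} exp(⟨W'_Q·f_q(X,q), W'_K(X j' − q)·F_P(X)_{j'}⟩). Then the occupancy score is SE(3)-invariant: for every R ∈ SO(3) and T ∈ ℝ³, 𝒯(L_{(R,T)}[X], R·q + T) = 𝒯(X, q). -/

import Mathlib

open Matrix

noncomputable section

/-- `SO(3)`: real 3×3 orthogonal matrices of determinant 1. -/
abbrev SO3 := Matrix.specialOrthogonalGroup (Fin 3) ℝ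

noncomputable instance : Group SO3 :=
  { (inferInstance : Monoid SO3) with
    inv := fun A => ⟨star A.1, ⟨Unitary.star_mem A.2.1, by
      have h : (star A.1).det = star (A.1.det) := by
        rw [Matrix.star_eq_conjTranspose, Matrix.det_conjTranspose]
      have h2 : A.1.det = 1 := A.2.2
      simpa [MonoidHom.mem_mker, h2] using h⟩⟩
    inv_mul_cancel := fun A => Subtype.ext A.2.1.1 }

/-- Euclidean 3-space. -/
abbrev V3 := EuclideanSpace ℝ (Fin 3)

/-- Matrix-vector multiplication on Euclidean 3-space. -/
def mv (M : Matrix (Fin 3) (Fin 3) ℝ) (v : V3) : V3 :=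
  (WithLp.equiv 2 (Fin 3 → ℝ)).symm (M *ᵥ (WithLp.equiv 2 (Fin 3 → ℝ) v))

/-- Roto-translation action `L_{(R,T)}` on point clouds: `(L_{(R,T)}[X]) i = R·(X i) + T`. -/
def rt {N : ℕ} (R : SO3) (T : V3) (X : Fin N → V3) : Fin N → V3 :=
  fun i => mv (R : Matrix (Fin 3) (Fin 3) ℝ) (X i) + T

open scoped Classical in
/-- `d_k(X,i)`: the k-th smallest distance from `X i` to points of `X`. -/
def dk {N : ℕ} (X : Fin N → V3) (i : Fin N) (k : ℕ) : ℝ :=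
  sInf { d : ℝ | k ≤ (Finset.univ.filter (fun j => ‖X i - X j‖ ≤ d)).card }

open scoped Classical in
/-- `N_i^k(X)`: the k-nearest-neighbor neighborhood of point `i` (including ties). -/
def nbhd {N : ℕ} (X : Fin N → V3) (i : Fin N) (k : ℕ) : Finset (Fin N) :=
  Finset.univ.filter (fun j => ‖X i - X j‖ ≤ dk X i k)

/-- The centroid-relative input feature `f_i(X)`. -/
def feat {N : ℕ} (X : Fin N → V3) (i : Fin N) (k : ℕ) : V3 :=
  X i - ((nbhd X i k).card : ℝ)⁻¹ • ∑ j ∈ nbhd X i k, X j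

/-- The query feature `f_q(X,q)` relative to the neighborhood of the nearest index `c`. -/
def qfeat {N : ℕ} (X : Fin N → V3) (q : V3) (c : Fin N) (k : ℕ) : V3 :=
  q - ((nbhd X c k).card : ℝ)⁻¹ • ∑ j ∈ nbhd X c k, X j

/-- The self-attention output features
`F_P(X)_i = Σ_{j ∈ N_i^k(X)} α(i,j)·W_V(X j − X i)·f_j(X)`. -/
def FP {N : ℕ} (k : ℕ) (WQ : Matrix (Fin 3) (Fin 3) ℝ)
    (WK WV : V3 → Matrix (Fin 3) (Fin 3) ℝ) (X : Fin N → V3) (i : Fin N) : Fin 3 → ℝ :=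
  ∑ j ∈ nbhd X i k,
    (Real.exp ((WQ *ᵥ feat X i k) ⬝ᵥ (WK (X j - X i) *ᵥ feat X j k)) /
      ∑ j' ∈ nbhd X i k,
        Real.exp ((WQ *ᵥ feat X i k) ⬝ᵥ (WK (X j' - X i) *ᵥ feat X j' k))) •
      (WV (X j - X i) *ᵥ feat X j k)

/-- The occupancy score `𝒯(X,q) = Σ_{j ∈ N_c^k(X)} β(j)·W'_V(X j − q)·F_P(X)_j`,
where `c` is the (unique) nearest index of `q` in `X`. -/
def occScore {N : ℕ} (k : ℕ) (WQ W'Q : Matrix (Fin 3) (Fin 3) ℝ)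
    (WK WV W'K : V3 → Matrix (Fin 3) (Fin 3) ℝ) (W'V : V3 → Matrix (Fin 1) (Fin 3) ℝ)
    (X : Fin N → V3) (q : V3) (c : Fin N) : ℝ :=
  (∑ j ∈ nbhd X c k,
    (Real.exp ((W'Q *ᵥ qfeat X q c k) ⬝ᵥ (W'K (X j - q) *ᵥ FP k WQ WK WV X j)) /
      ∑ j' ∈ nbhd X c k,
        Real.exp ((W'Q *ᵥ qfeat X q c k) ⬝ᵥ (W'K (X j' - q) *ᵥ FP k WQ WK WV X j'))) •
      (W'V (X j - q) *ᵥ FP k WQ WK WV X j)) 0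

/-! A roto-translation moves every point-cloud feature by the rotation alone: neighbourhoods only
see pairwise distances, and the features are differences of points or of a point and a
centroid, in which the translation cancels. The intertwining conditions on the weights then turn
every attention score into a dot product of two rotated vectors, which is invariant, while the
values rotate along; the row-vector map `W'V` finally absorbs the rotation. -/

open WithLp

section Orthogonal

variable {n : Type*} [Fintype n] [DecidableEq n] {A : Matrix n n ℝ}

theorem Matrix.dotProduct_mulVec_mulVec_of_mem_orthogonalGroup
    (hA : A ∈ orthogonalGroup n ℝ) (a b : n → ℝ) : A *ᵥ a ⬝ᵥ A *ᵥ b = a ⬝ᵥ b := by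
  rw [dotProduct_mulVec, ← mulVec_transpose, mulVec_mulVec, (mem_orthogonalGroup_iff' n ℝ).1 hA,
    one_mulVec]

theorem Matrix.norm_toEuclideanLin_of_mem_orthogonalGroup
    (hA : A ∈ orthogonalGroup n ℝ) (v : EuclideanSpace ℝ n) : ‖toEuclideanLin A v‖ = ‖v‖ := by
  rw [← sq_eq_sq₀ (norm_nonneg _) (norm_nonneg _), ← real_inner_self_eq_norm_sq,
    ← real_inner_self_eq_norm_sq, EuclideanSpace.inner_eq_star_dotProduct,
    EuclideanSpace.inner_eq_star_dotProduct]
  exact dotProduct_mulVec_mulVec_of_mem_orthogonalGroup hA _ _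

end Orthogonal

theorem Matrix.mulVec_mulVec_eq_of_mul_eq {α l m n o : Type*} [CommSemiring α] [Fintype m]
    [Fintype n] [Fintype o] {A : Matrix l m α} {B : Matrix m n α} {C : Matrix l o α}
    {D : Matrix o n α} (h : A * B = C * D) (v : n → α) : A *ᵥ (B *ᵥ v) = C *ᵥ (D *ᵥ v) := by
  rw [mulVec_mulVec, h, ← mulVec_mulVec]

theorem map_add_sub_inv_card_smul_sum_map_add {𝕜 ι E F : Type*} [DivisionRing 𝕜] [CharZero 𝕜]
    [AddCommGroup E] [Module 𝕜 E] [AddCommGroup F] [Module 𝕜 F] (L : E →ₗ[𝕜] F) (T : F)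
    {s : Finset ι} (hs : s.Nonempty) (p : E) (x : ι → E) :
    L p + T - (s.card : 𝕜)⁻¹ • ∑ j ∈ s, (L (x j) + T) =
      L (p - (s.card : 𝕜)⁻¹ • ∑ j ∈ s, x j) := by
  have hT : (s.card : 𝕜)⁻¹ • (s.card • T) = T := by
    rw [← Nat.cast_smul_eq_nsmul 𝕜, smul_smul, inv_mul_cancel₀ (by exact_mod_cast hs.card_ne_zero),
      one_smul]
  rw [Finset.sum_add_distrib, Finset.sum_const, smul_add, hT, map_sub, map_smul, map_sum]
  abel

theorem sum_softmax_smul_eq_map {ι M M' : Type*} [AddCommMonoid M] [Module ℝ M]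
    [AddCommMonoid M'] [Module ℝ M'] (L : M →ₗ[ℝ] M') {s : Finset ι} {a a' : ι → ℝ}
    {v : ι → M} {v' : ι → M'} (ha : ∀ j ∈ s, a' j = a j) (hv : ∀ j ∈ s, v' j = L (v j)) :
    ∑ j ∈ s, (Real.exp (a' j) / ∑ j' ∈ s, Real.exp (a' j')) • v' j =
      L (∑ j ∈ s, (Real.exp (a j) / ∑ j' ∈ s, Real.exp (a j')) • v j) := by
  have hZ : ∑ j' ∈ s, Real.exp (a' j') = ∑ j' ∈ s, Real.exp (a j') :=
    Finset.sum_congr rfl fun j hj => by rw [ha j hj]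
  rw [hZ, map_sum]
  refine Finset.sum_congr rfl fun j hj => ?_
  rw [ha j hj, hv j hj, map_smul]

lemma ofLp_mv (M : Matrix (Fin 3) (Fin 3) ℝ) (v : V3) : ofLp (mv M v) = M *ᵥ ofLp v := rfl

lemma mv_eq_toEuclideanLin (M : Matrix (Fin 3) (Fin 3) ℝ) : mv M = toEuclideanLin M := rfl

lemma norm_mv (R : SO3) (v : V3) : ‖mv R.1 v‖ = ‖v‖ :=
  norm_toEuclideanLin_of_mem_orthogonalGroup R.2.1 v

lemma mv_add_sub_mv_add (M : Matrix (Fin 3) (Fin 3) ℝ) (T a b : V3) :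
    mv M a + T - (mv M b + T) = mv M (a - b) := by
  rw [mv_eq_toEuclideanLin, map_sub, add_sub_add_right_eq_sub]

section PointCloud

variable {N : ℕ} {k : ℕ}

lemma nbhd_congr {X Y : Fin N → V3} (h : ∀ i j, ‖Y i - Y j‖ = ‖X i - X j‖) (i : Fin N) :
    nbhd Y i k = nbhd X i k := by
  simp only [nbhd, dk, h]
  congr!

lemma dk_nonneg (hk : 1 ≤ k) (X : Fin N → V3) (i : Fin N) : 0 ≤ dk X i k := by
  refine Real.sInf_nonneg fun d hd => ?_
  obtain ⟨j, hj⟩ := Finset.card_pos.1 (hk.trans hd)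
  exact (norm_nonneg _).trans (Finset.mem_filter.1 hj).2

lemma mem_nbhd_self (hk : 1 ≤ k) (X : Fin N → V3) (i : Fin N) : i ∈ nbhd X i k := by
  simp [nbhd, dk_nonneg hk]

end PointCloud

section RotoTranslation

variable {N k : ℕ} (R : SO3) (T : V3) (X : Fin N → V3)

lemma rt_sub_rt (i j : Fin N) : rt R T X i - rt R T X j = mv R.1 (X i - X j) :=
  mv_add_sub_mv_add _ _ _ _

lemma rt_sub_mv_add (j : Fin N) (q : V3) : rt R T X j - (mv R.1 q + T) = mv R.1 (X j - q) :=
  mv_add_sub_mv_add _ _ _ _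

lemma nbhd_rt (i : Fin N) : nbhd (rt R T X) i k = nbhd X i k :=
  nbhd_congr (fun i j => by rw [rt_sub_rt, norm_mv]) i

lemma feat_rt (hk : 1 ≤ k) (i : Fin N) : feat (rt R T X) i k = mv R.1 (feat X i k) := by
  rw [feat, feat, nbhd_rt]
  exact map_add_sub_inv_card_smul_sum_map_add (toEuclideanLin R.1) T ⟨i, mem_nbhd_self hk X i⟩
    (X i) X

lemma qfeat_rt (hk : 1 ≤ k) (q : V3) (c : Fin N) :
    qfeat (rt R T X) (mv R.1 q + T) c k = mv R.1 (qfeat X q c k) := by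
  rw [qfeat, qfeat, nbhd_rt]
  exact map_add_sub_inv_card_smul_sum_map_add (toEuclideanLin R.1) T ⟨c, mem_nbhd_self hk X c⟩
    q X

lemma FP_rt (hk : 1 ≤ k) {WQ : Matrix (Fin 3) (Fin 3) ℝ} {WK WV : V3 → Matrix (Fin 3) (Fin 3) ℝ}
    (hWQ : WQ * R.1 = R.1 * WQ) (hWK : ∀ y, WK (mv R.1 y) * R.1 = R.1 * WK y)
    (hWV : ∀ y, WV (mv R.1 y) * R.1 = R.1 * WV y) (i : Fin N) :
    FP k WQ WK WV (rt R T X) i = R.1 *ᵥ FP k WQ WK WV X i := by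
  rw [FP, FP, nbhd_rt]
  refine sum_softmax_smul_eq_map (mulVecLin R.1) (fun j _ => ?_) (fun j _ => ?_)
  · rw [rt_sub_rt, feat_rt R T X hk, feat_rt R T X hk, ofLp_mv, ofLp_mv,
      mulVec_mulVec_eq_of_mul_eq hWQ, mulVec_mulVec_eq_of_mul_eq (hWK _),
      dotProduct_mulVec_mulVec_of_mem_orthogonalGroup R.2.1]
  · rw [rt_sub_rt, feat_rt R T X hk, ofLp_mv, mulVec_mulVec_eq_of_mul_eq (hWV _),
      mulVecLin_apply]

end RotoTranslation

theorem occScore_invariant_general (N : ℕ) (k : ℕ) (hk1 : 1 ≤ k)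
    (WQ W'Q : Matrix (Fin 3) (Fin 3) ℝ)
    (hWQ : ∀ R : SO3, WQ * (R : Matrix (Fin 3) (Fin 3) ℝ) =
      (R : Matrix (Fin 3) (Fin 3) ℝ) * WQ)
    (hW'Q : ∀ R : SO3, W'Q * (R : Matrix (Fin 3) (Fin 3) ℝ) =
      (R : Matrix (Fin 3) (Fin 3) ℝ) * W'Q)
    (WK WV W'K : V3 → Matrix (Fin 3) (Fin 3) ℝ)
    (hWK : ∀ (R : SO3) (y : V3),
      WK (mv (R : Matrix (Fin 3) (Fin 3) ℝ) y) * (R : Matrix (Fin 3) (Fin 3) ℝ) =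
        (R : Matrix (Fin 3) (Fin 3) ℝ) * WK y)
    (hWV : ∀ (R : SO3) (y : V3),
      WV (mv (R : Matrix (Fin 3) (Fin 3) ℝ) y) * (R : Matrix (Fin 3) (Fin 3) ℝ) =
        (R : Matrix (Fin 3) (Fin 3) ℝ) * WV y)
    (hW'K : ∀ (R : SO3) (y : V3),
      W'K (mv (R : Matrix (Fin 3) (Fin 3) ℝ) y) * (R : Matrix (Fin 3) (Fin 3) ℝ) =
        (R : Matrix (Fin 3) (Fin 3) ℝ) * W'K y)
    (W'V : V3 → Matrix (Fin 1) (Fin 3) ℝ)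
    (hW'V : ∀ (R : SO3) (y : V3),
      W'V (mv (R : Matrix (Fin 3) (Fin 3) ℝ) y) * (R : Matrix (Fin 3) (Fin 3) ℝ) = W'V y)
    (X : Fin N → V3) (q : V3) (c : Fin N)
    (R : SO3) (T : V3) :
    occScore k WQ W'Q WK WV W'K W'V (rt R T X)
        (mv (R : Matrix (Fin 3) (Fin 3) ℝ) q + T) c =
      occScore k WQ W'Q WK WV W'K W'V X q c := by
  have hFP := FP_rt R T X hk1 (hWQ R) (hWK R) (hWV R)
  rw [occScore, occScore, nbhd_rt]
  refine congrFun (sum_softmax_smul_eq_map LinearMap.id (fun j _ => ?_) (fun j _ => ?_)) 0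
  · rw [rt_sub_mv_add, qfeat_rt R T X hk1, hFP, ofLp_mv,
      mulVec_mulVec_eq_of_mul_eq (hW'Q R), mulVec_mulVec_eq_of_mul_eq (hW'K R _),
      dotProduct_mulVec_mulVec_of_mem_orthogonalGroup R.2.1]
  · rw [rt_sub_mv_add, hFP, mulVec_mulVec, hW'V, LinearMap.id_apply]

/-- Proposition 1, concrete one-layer instantiation: the occupancy score
is SE(3)-invariant: `𝒯(L_{(R,T)}[X], R·q + T) = 𝒯(X, q)`. -/
theorem occScore_invariant (N : ℕ) (k : ℕ) (hk1 : 1 ≤ k) (hkN : k ≤ N)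
    (WQ W'Q : Matrix (Fin 3) (Fin 3) ℝ)
    (hWQ : ∀ R : SO3, WQ * (R : Matrix (Fin 3) (Fin 3) ℝ) =
      (R : Matrix (Fin 3) (Fin 3) ℝ) * WQ)
    (hW'Q : ∀ R : SO3, W'Q * (R : Matrix (Fin 3) (Fin 3) ℝ) =
      (R : Matrix (Fin 3) (Fin 3) ℝ) * W'Q)
    (WK WV W'K : V3 → Matrix (Fin 3) (Fin 3) ℝ)
    (hWK : ∀ (R : SO3) (y : V3),
      WK (mv (R : Matrix (Fin 3) (Fin 3) ℝ) y) * (R : Matrix (Fin 3) (Fin 3) ℝ) =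
        (R : Matrix (Fin 3) (Fin 3) ℝ) * WK y)
    (hWV : ∀ (R : SO3) (y : V3),
      WV (mv (R : Matrix (Fin 3) (Fin 3) ℝ) y) * (R : Matrix (Fin 3) (Fin 3) ℝ) =
        (R : Matrix (Fin 3) (Fin 3) ℝ) * WV y)
    (hW'K : ∀ (R : SO3) (y : V3),
      W'K (mv (R : Matrix (Fin 3) (Fin 3) ℝ) y) * (R : Matrix (Fin 3) (Fin 3) ℝ) =
        (R : Matrix (Fin 3) (Fin 3) ℝ) * W'K y)
    (W'V : V3 → Matrix (Fin 1) (Fin 3) ℝ)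
    (hW'V : ∀ (R : SO3) (y : V3),
      W'V (mv (R : Matrix (Fin 3) (Fin 3) ℝ) y) * (R : Matrix (Fin 3) (Fin 3) ℝ) = W'V y)
    (X : Fin N → V3) (q : V3) (c : Fin N)
    (hc : ∀ i : Fin N, i ≠ c → ‖q - X c‖ < ‖q - X i‖)
    (R : SO3) (T : V3) :
    occScore k WQ W'Q WK WV W'K W'V (rt R T X)
        (mv (R : Matrix (Fin 3) (Fin 3) ℝ) q + T) c =
      occScore k WQ W'Q WK WV W'K W'V X q c :=
  occScore_invariant_general N k hk1 WQ W'Q hWQ hW'Q WK WV W'K hWK hWV hW'K W'V hW'V X q c R T
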